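/- For x, y, z, v, w ∈ ℂ with v ≠ 0, the map sending the n×n matrix P(v,w) with entries C(i,j) v^j w^{i-j} and a weighted recurrence matrix with parameters (x, y, z) to the matrix P(v,w)^{-1} · M defines a left group action of the group {P(v,w) : v ≠ 0} on the set of weighted recurrence matrices: the parameters transform as (x, y, z) ↦ (x, v^{-1}y + w v^{-1} x, v^{-1} z − w v^{-1}), and in particular P(v,w)^{-1} · M is again a weighted recurrence matrix for every weighted recurrence matrix M. -/

import Mathlib

open Matrix

/-- The weighted 7-matrix `P(v,w)` with entries `C(i,j) v^j w^(i-j)`. -/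
def Pmat (n : ℕ) (v w : ℂ) : Matrix (Fin n) (Fin n) ℂ :=
  Matrix.of fun i j : Fin n => (Nat.choose i j : ℂ) * v ^ (j : ℕ) * w ^ ((i : ℕ) - (j : ℕ))

/-- `M` satisfies the weighted recurrence with parameters `(x, y, z)`. -/
def SatRec (n : ℕ) (x y z : ℂ) (M : Matrix (Fin n) (Fin n) ℂ) : Prop :=
  ∀ (i j : ℕ) (hi : i < n) (hj : j < n), 1 ≤ i → 1 ≤ j →
    M ⟨i, hi⟩ ⟨j, hj⟩ =
      x * M ⟨i, hi⟩ ⟨j - 1, by omega⟩ +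
        y * M ⟨i - 1, by omega⟩ ⟨j - 1, by omega⟩ +
        z * M ⟨i - 1, by omega⟩ ⟨j, hj⟩

/-- Vandermonde-type binomial sum. -/
lemma bin_sum (i j : ℕ) (v w r s : ℂ) :
    ∑ k ∈ Finset.range (i+1),
      ((i.choose k : ℂ) * v ^ k * w ^ (i - k)) * ((k.choose j : ℂ) * r ^ j * s ^ (k - j))
      = (i.choose j : ℂ) * (v * r) ^ j * (v * s + w) ^ (i - j) := by
  rcases le_or_gt j i with hji | hij
  · rw [Finset.range_eq_Ico, ← Finset.sum_Ico_consecutive _ (Nat.zero_le j) (by omega : j ≤ i + 1)]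
    have h0 : ∑ k ∈ Finset.Ico 0 j,
        ((i.choose k : ℂ) * v ^ k * w ^ (i - k)) * ((k.choose j : ℂ) * r ^ j * s ^ (k - j)) = 0 := by
      apply Finset.sum_eq_zero
      intro k hk
      simp only [Finset.mem_Ico] at hk
      rw [Nat.choose_eq_zero_of_lt hk.2]
      ring
    rw [h0, zero_add, Finset.sum_Ico_eq_sum_range]
    have hlen : i + 1 - j = (i - j) + 1 := by omega
    rw [hlen]
    have : ∀ m ∈ Finset.range ((i - j) + 1),
        ((i.choose (j + m) : ℂ) * v ^ (j + m) * w ^ (i - (j + m))) *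
          (((j + m).choose j : ℂ) * r ^ j * s ^ ((j + m) - j))
        = (i.choose j : ℂ) * (v * r) ^ j *
            ((v * s) ^ m * w ^ ((i - j) - m) * ((i - j).choose m : ℂ)) := by
      intro m hm
      simp only [Finset.mem_range] at hm
      have hmi : j + m ≤ i := by omega
      have hcm : (i.choose (j + m) : ℕ) * ((j + m).choose j) = i.choose j * ((i - j).choose m) := by
        have := Nat.choose_mul (n := i) (Nat.le_add_right j m)
        simpa [Nat.add_sub_cancel_left] using this
      have hcc : ((i.choose (j + m) : ℂ) * ((j + m).choose j : ℂ))
          = (i.choose j : ℂ) * ((i - j).choose m : ℂ) := by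
        exact_mod_cast congrArg (Nat.cast : ℕ → ℂ) hcm
      have he1 : i - (j + m) = (i - j) - m := by omega
      have he2 : (j + m) - j = m := by omega
      rw [he1, he2, pow_add, mul_pow]
      calc ((i.choose (j + m) : ℂ) * (v ^ j * v ^ m) * w ^ ((i - j) - m)) *
              (((j + m).choose j : ℂ) * r ^ j * s ^ m)
          = ((i.choose (j + m) : ℂ) * ((j + m).choose j : ℂ)) *
              (v ^ j * v ^ m * w ^ ((i - j) - m) * r ^ j * s ^ m) := by ring
        _ = ((i.choose j : ℂ) * ((i - j).choose m : ℂ)) *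
              (v ^ j * v ^ m * w ^ ((i - j) - m) * r ^ j * s ^ m) := by rw [hcc]
        _ = (i.choose j : ℂ) * (v ^ j * r ^ j) *
              ((v * s) ^ m * w ^ ((i - j) - m) * ((i - j).choose m : ℂ)) := by
              rw [mul_pow]; ring
    rw [Finset.sum_congr rfl this, ← Finset.mul_sum, ← add_pow]
  · have h1 : (i.choose j : ℂ) = 0 := by
      rw [Nat.choose_eq_zero_of_lt hij]; simp
    rw [h1]
    rw [Finset.sum_eq_zero]
    · ring
    · intro k hk
      simp only [Finset.mem_range] at hk
      have : k < j := by omega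
      rw [Nat.choose_eq_zero_of_lt this]
      ring

lemma Pmat_mul (n : ℕ) (v w r s : ℂ) :
    Pmat n v w * Pmat n r s = Pmat n (v * r) (v * s + w) := by
  ext i j
  rw [Matrix.mul_apply]
  have h1 : ∑ k : Fin n, Pmat n v w i k * Pmat n r s k j
      = ∑ k ∈ Finset.range n,
          (((i : ℕ).choose k : ℂ) * v ^ k * w ^ ((i : ℕ) - k)) *
            ((k.choose (j : ℕ) : ℂ) * r ^ (j : ℕ) * s ^ (k - (j : ℕ))) := by
    rw [← Fin.sum_univ_eq_sum_range]
    rfl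
  rw [h1]
  rw [← Finset.sum_subset (Finset.range_subset_range.2 (by omega : (i : ℕ) + 1 ≤ n))]
  · rw [bin_sum]
    rfl
  · intro k _ hk
    simp only [Finset.mem_range, not_lt] at hk
    rw [Nat.choose_eq_zero_of_lt (by omega : (i : ℕ) < k)]
    ring

lemma Pmat_one (n : ℕ) : Pmat n 1 0 = 1 := by
  ext i j
  simp only [Pmat, Matrix.of_apply, one_pow, mul_one, Matrix.one_apply]
  rcases lt_trichotomy (i : ℕ) (j : ℕ) with h | h | h
  · have hne : i ≠ j := fun he => by rw [he] at h; exact lt_irrefl _ h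
    rw [Nat.choose_eq_zero_of_lt h, if_neg hne]
    simp
  · have : i = j := Fin.ext h
    subst this
    simp
  · have hne : i ≠ j := fun he => by rw [he] at h; exact lt_irrefl _ h
    rw [if_neg hne, zero_pow (by omega : (i : ℕ) - (j : ℕ) ≠ 0)]
    ring

lemma Pmat_inv (n : ℕ) (v w : ℂ) (hv : v ≠ 0) :
    (Pmat n v w)⁻¹ = Pmat n v⁻¹ (-(v⁻¹ * w)) := by
  apply Matrix.inv_eq_right_inv
  rw [Pmat_mul]
  have h1 : v * v⁻¹ = 1 := mul_inv_cancel₀ hv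
  have h2 : v * -(v⁻¹ * w) + w = 0 := by
    field_simp
    ring
  rw [h1, h2, Pmat_one]

/-- Extension of a matrix to a total function. -/
noncomputable def Mext (n : ℕ) (M : Matrix (Fin n) (Fin n) ℂ) (p q : ℕ) : ℂ :=
  if h : p < n ∧ q < n then M ⟨p, h.1⟩ ⟨q, h.2⟩ else 0

lemma Mext_eq (n : ℕ) (M : Matrix (Fin n) (Fin n) ℂ) {p q : ℕ} (h1 : p < n) (h2 : q < n) :
    Mext n M p q = M ⟨p, h1⟩ ⟨q, h2⟩ := dif_pos ⟨h1, h2⟩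

/-- Binomially weighted partial sum. -/
noncomputable def Tsum (a b : ℂ) (f : ℕ → ℕ → ℂ) (p q : ℕ) : ℂ :=
  ∑ m ∈ Finset.range (p+1), (p.choose m : ℂ) * a ^ m * b ^ (p - m) * f m q

lemma Tsum_succ (a b : ℂ) (f : ℕ → ℕ → ℂ) (p q : ℕ) :
    Tsum a b f (p+1) q = a * Tsum a b (fun m r => f (m+1) r) p q + b * Tsum a b f p q := by
  unfold Tsum
  rw [Finset.sum_range_succ'
    (fun k => ((p+1).choose k : ℂ) * a ^ k * b ^ (p + 1 - k) * f k q) (p+1)]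
  have hL : ∀ m ∈ Finset.range (p+1),
      ((p+1).choose (m+1) : ℂ) * a ^ (m+1) * b ^ (p + 1 - (m+1)) * f (m+1) q
      = a * ((p.choose m : ℂ) * a ^ m * b ^ (p - m) * f (m+1) q)
        + (p.choose (m+1) : ℂ) * a ^ (m+1) * b ^ (p - m) * f (m+1) q := by
    intro m hm
    have h1 : (p + 1 - (m+1)) = p - m := by omega
    rw [h1, Nat.choose_succ_succ']
    push_cast
    ring
  rw [Finset.sum_congr rfl hL, Finset.sum_add_distrib]
  have hR : b * ∑ m ∈ Finset.range (p+1), (p.choose m : ℂ) * a ^ m * b ^ (p - m) * f m q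
      = (∑ m ∈ Finset.range (p+1), (p.choose (m+1) : ℂ) * a ^ (m+1) * b ^ (p - m) * f (m+1) q)
        + ((p+1).choose 0 : ℂ) * a ^ 0 * b ^ (p + 1 - 0) * f 0 q := by
    rw [Finset.sum_range_succ'
      (fun k => (p.choose k : ℂ) * a ^ k * b ^ (p - k) * f k q) p]
    rw [Finset.sum_range_succ
      (fun m => (p.choose (m+1) : ℂ) * a ^ (m+1) * b ^ (p - m) * f (m+1) q) p]
    rw [Nat.choose_succ_self]
    push_cast
    rw [mul_add]
    rw [Finset.mul_sum]
    have : ∀ m ∈ Finset.range p,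
        b * ((p.choose (m+1) : ℂ) * a ^ (m+1) * b ^ (p - (m+1)) * f (m+1) q)
        = (p.choose (m+1) : ℂ) * a ^ (m+1) * b ^ (p - m) * f (m+1) q := by
      intro m hm
      simp only [Finset.mem_range] at hm
      have : p - m = (p - (m+1)) + 1 := by omega
      rw [this, pow_succ]
      ring
    rw [Finset.sum_congr rfl this]
    simp only [Nat.choose_zero_right, Nat.cast_one, one_mul, pow_zero, mul_one,
      Nat.sub_zero, Nat.cast_zero, zero_mul, add_zero]
    rw [pow_succ]
    ring
  rw [hR, ← Finset.mul_sum]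
  beta_reduce
  ring

lemma Urec (n : ℕ) (x y z : ℂ) (M : Matrix (Fin n) (Fin n) ℂ) (hM : SatRec n x y z M)
    (a b : ℂ) (p q : ℕ) (hp : p + 1 < n) (hq : q < n) (hq1 : 1 ≤ q) :
    Tsum a b (fun m r => Mext n M (m+1) r) p q
      = x * Tsum a b (fun m r => Mext n M (m+1) r) p (q-1)
        + y * Tsum a b (Mext n M) p (q-1) + z * Tsum a b (Mext n M) p q := by
  unfold Tsum
  rw [Finset.mul_sum, Finset.mul_sum, Finset.mul_sum, ← Finset.sum_add_distrib,
    ← Finset.sum_add_distrib]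
  apply Finset.sum_congr rfl
  intro m hm
  simp only [Finset.mem_range] at hm
  have hm1 : m + 1 < n := by omega
  have hq' : q - 1 < n := by omega
  have hmn : m < n := by omega
  have hrec := hM (m+1) q hm1 hq (by omega) hq1
  simp only [Nat.add_sub_cancel] at hrec
  beta_reduce
  rw [Mext_eq n M hm1 hq, Mext_eq n M hm1 hq', Mext_eq n M hmn hq', Mext_eq n M hmn hq, hrec]
  ring

lemma key (n : ℕ) (x y z a b : ℂ) (M : Matrix (Fin n) (Fin n) ℂ) (hM : SatRec n x y z M) :
    SatRec n x (a * y - b * x) (a * z + b) (Pmat n a b * M) := by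
  have hN : ∀ (p q : ℕ) (hp : p < n) (hq : q < n),
      (Pmat n a b * M) ⟨p, hp⟩ ⟨q, hq⟩ = Tsum a b (Mext n M) p q := by
    intro p q hp hq
    rw [Matrix.mul_apply]
    have h1 : ∑ k : Fin n, Pmat n a b ⟨p, hp⟩ k * M k ⟨q, hq⟩
        = ∑ k ∈ Finset.range n, (p.choose k : ℂ) * a ^ k * b ^ (p - k) * Mext n M k q := by
      rw [← Fin.sum_univ_eq_sum_range
        (fun k => (p.choose k : ℂ) * a ^ k * b ^ (p - k) * Mext n M k q)]
      apply Finset.sum_congr rfl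
      intro k _
      rw [Mext_eq n M k.isLt hq]
      simp [Pmat, mul_assoc]
    rw [h1]
    unfold Tsum
    exact (Finset.sum_subset (Finset.range_subset_range.2 (by omega : p + 1 ≤ n)) (fun k _ hk => by
      simp only [Finset.mem_range, not_lt] at hk
      rw [Nat.choose_eq_zero_of_lt (by omega : p < k)]
      ring)).symm
  intro i j hi hj hi1 hj1
  obtain ⟨p, rfl⟩ : ∃ p, i = p + 1 := ⟨i - 1, by omega⟩
  have e1 : p + 1 - 1 = p := rfl
  rw [hN, hN, hN, hN, e1]
  rw [Tsum_succ a b (Mext n M) p j, Tsum_succ a b (Mext n M) p (j-1),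
    Urec n x y z M hM a b p j hi hj hj1]
  ring

theorem stmt_19 (n : ℕ) :
    (∀ (x y z v w : ℂ), v ≠ 0 → ∀ M : Matrix (Fin n) (Fin n) ℂ,
        SatRec n x y z M →
          SatRec n x (v⁻¹ * y + w * v⁻¹ * x) (v⁻¹ * z - w * v⁻¹) ((Pmat n v w)⁻¹ * M)) ∧
    (∀ M : Matrix (Fin n) (Fin n) ℂ, (Pmat n 1 0)⁻¹ * M = M) ∧
    (∀ (v w r s : ℂ), v ≠ 0 → r ≠ 0 → ∀ M : Matrix (Fin n) (Fin n) ℂ,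
        (Pmat n v w * Pmat n r s)⁻¹ * M = (Pmat n r s)⁻¹ * ((Pmat n v w)⁻¹ * M)) := by
  refine ⟨?_, ?_, ?_⟩
  · intro x y z v w hv M hM
    rw [Pmat_inv n v w hv]
    have e1 : v⁻¹ * y + w * v⁻¹ * x = v⁻¹ * y - (-(v⁻¹ * w)) * x := by ring
    have e2 : v⁻¹ * z - w * v⁻¹ = v⁻¹ * z + (-(v⁻¹ * w)) := by ring
    rw [e1, e2]
    exact key n x y z v⁻¹ (-(v⁻¹ * w)) M hM
  · intro M
    rw [Pmat_one, inv_one, one_mul]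
  · intro v w r s hv hr M
    rw [Matrix.mul_inv_rev, Matrix.mul_assoc]
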